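/- arXiv:0802.2128 — 3 statements merged into one kernel-verified Lean document; each statement's English description precedes it below -/
import Mathlib

section
/- Let X be a double suit over base set A and dimension N. Then X is perfect if and only if X ·_∅ ¬X = 0. -/
/-- A team: a set of valuations `Fin N → A`. -/
abbrev Team (A : Type*) (N : ℕ) := Set (Fin N → A)

/-- A pair of collections of teams. -/
abbrev TPair (A : Type*) (N : ℕ) := Set (Team A N) × Set (Team A N)

/-- A suit: a nonempty collection of teams closed under subsets. -/
def IsSuit {A : Type*} {N : ℕ} (S : Set (Team A N)) : Prop :=
  S.Nonempty ∧ ∀ ⦃V V' : Team A N⦄, V ∈ S → V' ⊆ V → V' ∈ S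

/-- A double suit: a pair of suits whose intersection is `{∅}`. -/
def IsDoubleSuit {A : Type*} {N : ℕ} (X : TPair A N) : Prop :=
  IsSuit X.1 ∧ IsSuit X.2 ∧ X.1 ∩ X.2 = {∅}

/-- The pair `(𝒫(V), 𝒫(^N A \ V))`. -/
def perfPair {A : Type*} {N : ℕ} (V : Team A N) : TPair A N :=
  (Set.powerset V, Set.powerset Vᶜ)

/-- A pair is perfect if it equals `(𝒫(V), 𝒫(^N A \ V))` for some team `V`. -/
def IsPerfect {A : Type*} {N : ℕ} (X : TPair A N) : Prop :=
  ∃ V : Team A N, X = perfPair V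

/-- The constant `0 = ({∅}, 𝒫(^N A))`. -/
def zeroP (A : Type*) (N : ℕ) : TPair A N := ({∅}, Set.univ)

/-- The constant `1 = (𝒫(^N A), {∅})`. -/
def oneP (A : Type*) (N : ℕ) : TPair A N := (Set.univ, {∅})

/-- The diagonal element `D_ij`. -/
def diagP (A : Type*) {N : ℕ} (i j : Fin N) : TPair A N :=
  (Set.powerset {a : Fin N → A | a i = a j}, Set.powerset {a : Fin N → A | a i ≠ a j})

/-- Negation: `¬(X⁺, X⁻) = (X⁻, X⁺)`. -/
def negP {A : Type*} {N : ℕ} (X : TPair A N) : TPair A N := (X.2, X.1)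

/-- The operation `+_∅`. -/
def addE {A : Type*} {N : ℕ} (X Y : TPair A N) : TPair A N :=
  ({V | ∃ V₁ ∈ X.1, ∃ V₂ ∈ Y.1, Disjoint V₁ V₂ ∧ V₁ ∪ V₂ = V}, X.2 ∩ Y.2)

/-- The operation `·_∅`. -/
def mulE {A : Type*} {N : ℕ} (X Y : TPair A N) : TPair A N :=
  (X.1 ∩ Y.1, {W | ∃ W₁ ∈ X.2, ∃ W₂ ∈ Y.2, Disjoint W₁ W₂ ∧ W₁ ∪ W₂ = W})

/-- The `n`-variation of `V` by `f`: `V(n:f) = {a(n:f(a)) : a ∈ V}`. -/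
def varF {A : Type*} {N : ℕ} (V : Team A N) (n : Fin N) (f : (Fin N → A) → A) : Team A N :=
  (fun a => Function.update a n (f a)) '' V

/-- `V(n:A) = {a(n:b) : a ∈ V, b ∈ A}`. -/
def varAll {A : Type*} {N : ℕ} (V : Team A N) (n : Fin N) : Team A N :=
  {c | ∃ a ∈ V, ∃ b : A, c = Function.update a n b}

/-- The cylindrification `C_{n,∅}` (every `f : V → A` is independent of `∅`). -/
def cylE {A : Type*} {N : ℕ} (n : Fin N) (X : TPair A N) : TPair A N :=
  ({V | ∃ f : (Fin N → A) → A, varF V n f ∈ X.1}, {W | varAll W n ∈ X.2})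

/-!
If `X = (𝒫 V, 𝒫 Vᶜ)`, every team splits as `(W ∩ Vᶜ) ∪ (W ∩ V)`, while `𝒫 V ∩ 𝒫 Vᶜ = {∅}`.
Conversely, `X ·_∅ ¬X = 0` puts the full team in the negative part, i.e. gives complementary
teams `Vᶜ ∈ X⁻` and `V ∈ X⁺`. In a double suit a positive and a negative team are disjoint
(a common valuation `a` would put `{a}` in `X⁺ ∩ X⁻`), so downward closure forces
`X⁺ = 𝒫 V` and `X⁻ = 𝒫 Vᶜ`.
-/

section

variable {A : Type*} {N : ℕ}

theorem IsSuit.powerset_subset {S : Set (Team A N)} (hS : IsSuit S) {V : Team A N}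
    (hV : V ∈ S) : Set.powerset V ⊆ S :=
  fun _ => hS.2 hV

namespace IsDoubleSuit

variable {X : TPair A N}

theorem disjoint (hX : IsDoubleSuit X) {U W : Team A N} (hU : U ∈ X.1) (hW : W ∈ X.2) :
    Disjoint U W := by
  refine Set.disjoint_left.mpr fun a haU haW => ?_
  have hboth : ({a} : Team A N) ∈ X.1 ∩ X.2 :=
    ⟨hX.1.2 hU (Set.singleton_subset_iff.mpr haU), hX.2.1.2 hW (Set.singleton_subset_iff.mpr haW)⟩
  rw [hX.2.2] at hboth
  exact Set.singleton_ne_empty a hboth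

theorem eq_perfPair (hX : IsDoubleSuit X) {V : Team A N} (hV : V ∈ X.1) (hVc : Vᶜ ∈ X.2) :
    X = perfPair V := by
  refine Prod.ext (Set.Subset.antisymm ?_ (hX.1.powerset_subset hV))
    (Set.Subset.antisymm ?_ (hX.2.1.powerset_subset hVc))
  · exact fun U hU => Set.disjoint_compl_right_iff_subset.mp (hX.disjoint hU hVc)
  · exact fun W hW => Set.subset_compl_iff_disjoint_left.mpr (hX.disjoint hV hW)

end IsDoubleSuit

theorem mulE_perfPair_negP (V : Team A N) : mulE (perfPair V) (negP (perfPair V)) = zeroP A N := by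
  refine Prod.ext ?_ (Set.eq_univ_of_forall fun W => ?_)
  · simp [mulE, negP, perfPair, zeroP, ← Set.powerset_inter]
  · exact ⟨W ∩ Vᶜ, Set.inter_subset_right, W ∩ V, Set.inter_subset_right,
      (disjoint_compl_left.mono_left Set.inter_subset_right).mono_right Set.inter_subset_right,
      by rw [← Set.inter_union_distrib_left, Set.compl_union_self, Set.inter_univ]⟩

end

/-- A double suit `X` is perfect iff `X ·_∅ ¬X = 0`. -/
theorem perfect_iff_mulE_neg_eq_zero {A : Type*} {N : ℕ} (X : TPair A N)
    (hX : IsDoubleSuit X) :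
    IsPerfect X ↔ mulE X (negP X) = zeroP A N := by
  constructor
  · rintro ⟨V, rfl⟩
    exact mulE_perfPair_negP V
  · intro h
    obtain ⟨W, hW, V, hV, hdisj, hunion⟩ : Set.univ ∈ (mulE X (negP X)).2 := h ▸ trivial
    have hWV : W = Vᶜ := eq_compl_iff_isCompl.mpr ⟨hdisj, codisjoint_iff.mpr hunion⟩
    exact ⟨V, hX.eq_perfPair hV (hWV ▸ hW)⟩
end

section
/- The collection of double suits over base set A and dimension N contains the constants 0, 1, and D_ij for all i, j < N, and is closed under the operations ¬, +_J, ·_J, and C_{n,J} for all J ⊆ Fin N and n < N; that is, if X and Y are double suits, then so are ¬X, X +_J Y, X ·_J Y, and C_{n,J}(X). -/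
/-- A pair of suits. -/
def IsSuitPair {A : Type*} {N : ℕ} (X : TPair A N) : Prop :=
  IsSuit X.1 ∧ IsSuit X.2

/-- `a ≈_J b` : the valuations `a` and `b` agree outside of `J`. -/
def AgreeOutside {A : Type*} {N : ℕ} (J : Set (Fin N)) (a b : Fin N → A) : Prop :=
  ∀ i ∉ J, a i = b i

/-- `V = V₁ ∪_J V₂` : `V₁, V₂` form a `J`-saturated disjoint cover of `V`. -/
def CovJ {A : Type*} {N : ℕ} (J : Set (Fin N)) (V V₁ V₂ : Team A N) : Prop :=
  Disjoint V₁ V₂ ∧ V₁ ∪ V₂ = V ∧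
  (∀ a ∈ V₁, ∀ b ∈ V, AgreeOutside J a b → b ∈ V₁) ∧
  (∀ a ∈ V₂, ∀ b ∈ V, AgreeOutside J a b → b ∈ V₂)

/-- `f` is independent of `J` on `V`. -/
def IndepOn {A : Type*} {N : ℕ} (J : Set (Fin N)) (V : Team A N)
    (f : (Fin N → A) → A) : Prop :=
  ∀ a ∈ V, ∀ b ∈ V, AgreeOutside J a b → f a = f b

/-- The operation `+_J`. -/
def addJ {A : Type*} {N : ℕ} (J : Set (Fin N)) (X Y : TPair A N) : TPair A N :=
  ({V | ∃ V₁ ∈ X.1, ∃ V₂ ∈ Y.1, CovJ J V V₁ V₂}, X.2 ∩ Y.2)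

/-- The operation `·_J`. -/
def mulJ {A : Type*} {N : ℕ} (J : Set (Fin N)) (X Y : TPair A N) : TPair A N :=
  (X.1 ∩ Y.1, {W | ∃ W₁ ∈ X.2, ∃ W₂ ∈ Y.2, CovJ J W W₁ W₂})

/-- The cylindrification `C_{n,J}`. -/
def cylJ {A : Type*} {N : ℕ} (n : Fin N) (J : Set (Fin N)) (X : TPair A N) : TPair A N :=
  ({V | ∃ f : (Fin N → A) → A, IndepOn J V f ∧ varF V n f ∈ X.1}, {W | varAll W n ∈ X.2})


/-!
Downward closure survives every operation: a `J`-saturated cover of a team restricts to a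
`J`-saturated cover of any subteam, and `V(n:f)`, `V(n:A)` are monotone in `V`. Disjointness
(up to `∅`) survives because the positive side is always assembled from pieces lying below the
negative side: both parts of a cover of `V` are subteams of `V`, and `V(n:f) ⊆ V(n:A)`, where
`V(n:f)` is empty only if `V` is. The case of `·_J` reduces to `+_J`, of which it is the
de Morgan dual under `¬`.
-/

section DoubleSuit

variable {A : Type*} {N : ℕ}

namespace IsSuit

theorem empty_mem {S : Set (Team A N)} (hS : IsSuit S) : ∅ ∈ S :=
  let ⟨V, hV⟩ := hS.1
  hS.2 hV (Set.empty_subset V)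

theorem inter {S T : Set (Team A N)} (hS : IsSuit S) (hT : IsSuit T) : IsSuit (S ∩ T) :=
  ⟨⟨∅, hS.empty_mem, hT.empty_mem⟩, fun _ _ hV hV' => ⟨hS.2 hV.1 hV', hT.2 hV.2 hV'⟩⟩

theorem preimage {S : Set (Team A N)} {g : Team A N → Team A N} (hg : Monotone g)
    (hg₀ : g ∅ = ∅) (hS : IsSuit S) : IsSuit (g ⁻¹' S) :=
  ⟨⟨∅, by simpa only [Set.mem_preimage, hg₀] using hS.empty_mem⟩,
    fun _ _ hV hV' => hS.2 hV (hg hV')⟩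

end IsSuit

theorem isSuit_powerset (S : Team A N) : IsSuit S.powerset :=
  ⟨⟨∅, Set.empty_subset S⟩, fun _ _ hV hV' => hV'.trans hV⟩

theorem isSuit_univ : IsSuit (Set.univ : Set (Team A N)) :=
  ⟨⟨∅, trivial⟩, fun _ _ _ _ => trivial⟩

theorem isSuit_singleton_empty : IsSuit ({∅} : Set (Team A N)) :=
  ⟨⟨∅, rfl⟩, fun _ _ hV hV' => Set.subset_empty_iff.mp (hV ▸ hV')⟩

theorem isDoubleSuit_iff {X : TPair A N} :
    IsDoubleSuit X ↔ IsSuit X.1 ∧ IsSuit X.2 ∧ ∀ V ∈ X.1, V ∈ X.2 → V = ∅ := by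
  refine and_congr_right fun h₁ => and_congr_right fun h₂ => ?_
  refine ⟨fun h V hV₁ hV₂ => (h.subset ⟨hV₁, hV₂⟩ : V ∈ ({∅} : Set (Team A N))), fun h => ?_⟩
  refine Set.Subset.antisymm (fun V hV => h V hV.1 hV.2) ?_
  rintro _ rfl
  exact ⟨h₁.empty_mem, h₂.empty_mem⟩

theorem IsDoubleSuit.eq_empty {X : TPair A N} (hX : IsDoubleSuit X) {V : Team A N}
    (h₁ : V ∈ X.1) (h₂ : V ∈ X.2) : V = ∅ :=
  (isDoubleSuit_iff.mp hX).2.2 V h₁ h₂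

theorem isDoubleSuit_zeroP : IsDoubleSuit (zeroP A N) :=
  ⟨isSuit_singleton_empty, isSuit_univ, Set.inter_univ _⟩

theorem isDoubleSuit_oneP : IsDoubleSuit (oneP A N) :=
  ⟨isSuit_univ, isSuit_singleton_empty, Set.univ_inter _⟩

theorem isDoubleSuit_diagP (i j : Fin N) : IsDoubleSuit (diagP A i j) :=
  isDoubleSuit_iff.mpr ⟨isSuit_powerset _, isSuit_powerset _,
    fun _ hEq hNe => Set.subset_empty_iff.mp fun _ ha => hNe ha (hEq ha)⟩

theorem IsDoubleSuit.neg {X : TPair A N} (hX : IsDoubleSuit X) : IsDoubleSuit (negP X) :=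
  ⟨hX.2.1, hX.1, Set.inter_comm X.2 X.1 ▸ hX.2.2⟩

section Cover

variable {J : Set (Fin N)}

theorem covJ_empty (J : Set (Fin N)) : CovJ J (∅ : Team A N) ∅ ∅ :=
  ⟨disjoint_bot_left, Set.union_empty _, fun _ h => h.elim, fun _ h => h.elim⟩

theorem CovJ.restrict {V V₁ V₂ V' : Team A N} (h : CovJ J V V₁ V₂) (hV' : V' ⊆ V) :
    CovJ J V' (V₁ ∩ V') (V₂ ∩ V') := by
  obtain ⟨hdisj, hunion, hsat₁, hsat₂⟩ := h
  refine ⟨hdisj.mono Set.inter_subset_left Set.inter_subset_left, ?_, ?_, ?_⟩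
  · rw [← Set.union_inter_distrib_right, hunion, Set.inter_eq_self_of_subset_right hV']
  · exact fun a ha b hb hab => ⟨hsat₁ a ha.1 b (hV' hb) hab, hb⟩
  · exact fun a ha b hb hab => ⟨hsat₂ a ha.1 b (hV' hb) hab, hb⟩

theorem CovJ.left_subset {V V₁ V₂ : Team A N} (h : CovJ J V V₁ V₂) : V₁ ⊆ V :=
  h.2.1 ▸ Set.subset_union_left

theorem CovJ.right_subset {V V₁ V₂ : Team A N} (h : CovJ J V V₁ V₂) : V₂ ⊆ V :=
  h.2.1 ▸ Set.subset_union_right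

theorem CovJ.eq_empty {V V₁ V₂ : Team A N} (h : CovJ J V V₁ V₂) (h₁ : V₁ = ∅) (h₂ : V₂ = ∅) :
    V = ∅ := by
  rw [← h.2.1, h₁, h₂, Set.union_empty]

theorem IsDoubleSuit.add {X Y : TPair A N} (hX : IsDoubleSuit X) (hY : IsDoubleSuit Y) :
    IsDoubleSuit (addJ J X Y) := by
  have hpos : IsSuit (addJ J X Y).1 :=
    ⟨⟨∅, ∅, hX.1.empty_mem, ∅, hY.1.empty_mem, covJ_empty J⟩,
      fun _ V' ⟨V₁, hV₁, V₂, hV₂, hcov⟩ hV' =>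
        ⟨_, hX.1.2 hV₁ Set.inter_subset_left, _, hY.1.2 hV₂ Set.inter_subset_left,
          hcov.restrict hV'⟩⟩
  refine isDoubleSuit_iff.mpr ⟨hpos, hX.2.1.inter hY.2.1, ?_⟩
  rintro V ⟨V₁, hV₁, V₂, hV₂, hcov⟩ ⟨hVX, hVY⟩
  exact hcov.eq_empty (hX.eq_empty hV₁ (hX.2.1.2 hVX hcov.left_subset))
    (hY.eq_empty hV₂ (hY.2.1.2 hVY hcov.right_subset))

theorem mulJ_eq_negP_addJ (X Y : TPair A N) :
    mulJ J X Y = negP (addJ J (negP X) (negP Y)) :=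
  rfl

theorem IsDoubleSuit.mul {X Y : TPair A N} (hX : IsDoubleSuit X) (hY : IsDoubleSuit Y) :
    IsDoubleSuit (mulJ J X Y) :=
  mulJ_eq_negP_addJ X Y ▸ (hX.neg.add hY.neg).neg

end Cover

section Cylindrification

variable {J : Set (Fin N)} {n : Fin N}

theorem IndepOn.mono {V V' : Team A N} {f : (Fin N → A) → A} (hf : IndepOn J V f)
    (hV' : V' ⊆ V) : IndepOn J V' f :=
  fun a ha b hb => hf a (hV' ha) b (hV' hb)

theorem varF_mono {V V' : Team A N} {f : (Fin N → A) → A} (hV' : V' ⊆ V) :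
    varF V' n f ⊆ varF V n f :=
  Set.image_mono hV'

theorem varF_eq_empty {V : Team A N} {f : (Fin N → A) → A} : varF V n f = ∅ ↔ V = ∅ :=
  Set.image_eq_empty

theorem varAll_mono : Monotone (varAll (A := A) · n) := by
  rintro V V' hV c ⟨a, ha, b, rfl⟩
  exact ⟨a, hV ha, b, rfl⟩

theorem varAll_empty : varAll (∅ : Team A N) n = ∅ :=
  Set.eq_empty_of_forall_notMem fun _ ⟨_, ha, _⟩ => ha

theorem varF_subset_varAll (V : Team A N) (f : (Fin N → A) → A) :
    varF V n f ⊆ varAll V n := by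
  rintro c ⟨a, ha, rfl⟩
  exact ⟨a, ha, f a, rfl⟩

theorem IsDoubleSuit.cyl {X : TPair A N} (hX : IsDoubleSuit X) :
    IsDoubleSuit (cylJ n J X) := by
  have hpos : IsSuit (cylJ n J X).1 :=
    ⟨⟨∅, (· n), fun _ h => h.elim, by rw [varF_eq_empty.mpr rfl]; exact hX.1.empty_mem⟩,
      fun _ _ ⟨f, hf, hmem⟩ hV' => ⟨f, hf.mono hV', hX.1.2 hmem (varF_mono hV')⟩⟩
  refine isDoubleSuit_iff.mpr ⟨hpos, hX.2.1.preimage varAll_mono varAll_empty, ?_⟩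
  rintro V ⟨f, -, hmem⟩ hall
  exact varF_eq_empty.mp (hX.eq_empty hmem (hX.2.1.2 hall (varF_subset_varAll V f)))

end Cylindrification

end DoubleSuit

/-- The double suits contain `0`, `1`, `D_ij` and are closed under
`¬`, `+_J`, `·_J`, and `C_{n,J}`. -/
theorem doubleSuits_closed (A : Type*) (N : ℕ) :
    IsDoubleSuit (zeroP A N) ∧
    IsDoubleSuit (oneP A N) ∧
    (∀ i j : Fin N, IsDoubleSuit (diagP A i j)) ∧
    (∀ X : TPair A N, IsDoubleSuit X → IsDoubleSuit (negP X)) ∧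
    (∀ (J : Set (Fin N)) (X Y : TPair A N),
      IsDoubleSuit X → IsDoubleSuit Y → IsDoubleSuit (addJ J X Y)) ∧
    (∀ (J : Set (Fin N)) (X Y : TPair A N),
      IsDoubleSuit X → IsDoubleSuit Y → IsDoubleSuit (mulJ J X Y)) ∧
    (∀ (n : Fin N) (J : Set (Fin N)) (X : TPair A N),
      IsDoubleSuit X → IsDoubleSuit (cylJ n J X)) :=
  ⟨isDoubleSuit_zeroP, isDoubleSuit_oneP, isDoubleSuit_diagP, fun _ => .neg,
    fun _ _ _ => .add, fun _ _ _ => .mul, fun _ _ _ => .cyl⟩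
end

section
/- Let φ be a perfect IFG_N-formula over σ (every slash set occurring in φ is ∅) and 𝔄 a σ-structure with universe A. Then for every team W ⊆ ^N A, 𝔄 ⊨⁻ φ[W] if and only if 𝔄 ⊨⁻ φ[{b}] for every b ∈ W. -/
open FirstOrder

/-- IFG_N-formulas over the signature `L`: atomic first-order formulas
(equalities and relations between terms in the variables `v_0, …, v_{N-1}`),
closed under `∼ψ`, `ψ₁ ∨_J ψ₂`, and `∃v_n/J ψ`. -/
inductive IFG (L : Language) (N : ℕ) : Type _
  | equal (t₁ t₂ : L.Term (Fin N)) : IFG L N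
  | rel {k : ℕ} (R : L.Relations k) (ts : Fin k → L.Term (Fin N)) : IFG L N
  | not (φ : IFG L N) : IFG L N
  | or (J : Set (Fin N)) (φ₁ φ₂ : IFG L N) : IFG L N
  | ex (n : Fin N) (J : Set (Fin N)) (φ : IFG L N) : IFG L N

/-- Hodges' trump semantics: `Sat A φ true V` means `𝔄 ⊨⁺ φ[V]` (`V` is a trump),
and `Sat A φ false W` means `𝔄 ⊨⁻ φ[W]` (`W` is a cotrump). -/
def Sat {L : Language} {N : ℕ} (A : Type*) [L.Structure A] :
    IFG L N → Bool → Team A N → Prop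
  | .equal t₁ t₂, true, V => ∀ a ∈ V, t₁.realize a = t₂.realize a
  | .equal t₁ t₂, false, W => ∀ a ∈ W, t₁.realize a ≠ t₂.realize a
  | .rel R ts, true, V => ∀ a ∈ V, Language.Structure.RelMap R (fun i => (ts i).realize a)
  | .rel R ts, false, W => ∀ a ∈ W, ¬ Language.Structure.RelMap R (fun i => (ts i).realize a)
  | .not φ, b, V => Sat A φ (!b) V
  | .or J φ₁ φ₂, true, V =>
      ∃ V₁ V₂, CovJ J V V₁ V₂ ∧ Sat A φ₁ true V₁ ∧ Sat A φ₂ true V₂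
  | .or _ φ₁ φ₂, false, W => Sat A φ₁ false W ∧ Sat A φ₂ false W
  | .ex n J φ, true, V =>
      ∃ f : (Fin N → A) → A, IndepOn J V f ∧ Sat A φ true (varF V n f)
  | .ex n _ φ, false, W => Sat A φ false (varAll W n)

/-- The meaning `‖φ‖_𝔄 = ({V : 𝔄 ⊨⁺ φ[V]}, {W : 𝔄 ⊨⁻ φ[W]})`. -/
def meaning {L : Language} {N : ℕ} (A : Type*) [L.Structure A] (φ : IFG L N) :
    TPair A N :=
  ({V | Sat A φ true V}, {W | Sat A φ false W})

/-- An IFG-formula is perfect if all of its slash sets are empty. -/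
def IFG.Perfect {L : Language} {N : ℕ} : IFG L N → Prop
  | .equal _ _ => True
  | .rel _ _ => True
  | .not φ => φ.Perfect
  | .or J φ₁ φ₂ => J = ∅ ∧ φ₁.Perfect ∧ φ₂.Perfect
  | .ex _ J φ => J = ∅ ∧ φ.Perfect

/-- The perfection `φ_∅` of `φ`: replace every slash set by `∅`. -/
def IFG.perfection {L : Language} {N : ℕ} : IFG L N → IFG L N
  | .equal t₁ t₂ => .equal t₁ t₂
  | .rel R ts => .rel R ts
  | .not φ => .not φ.perfection
  | .or _ φ₁ φ₂ => .or ∅ φ₁.perfection φ₂.perfection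
  | .ex n _ φ => .ex n ∅ φ.perfection

/-! Over perfect formulas both `⊨⁺` and `⊨⁻` are *flat*: a team satisfies a formula iff each
of its valuations does. With empty slash sets the constraints `∪_∅` and "independent of `∅`"
are vacuous, so a cover of a team is any disjoint split and a Skolem function may be chosen
pointwise; flatness then passes through every connective, both polarities at once because `∼`
swaps them. -/

section

variable {A : Type*} {N : ℕ}

lemma AgreeOutside.eq_of_empty {a b : Fin N → A} (h : AgreeOutside ∅ a b) : a = b :=
  funext fun i => h i (Set.notMem_empty i)

lemma covJ_empty_iff {V V₁ V₂ : Team A N} :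
    CovJ ∅ V V₁ V₂ ↔ Disjoint V₁ V₂ ∧ V₁ ∪ V₂ = V :=
  ⟨fun h => ⟨h.1, h.2.1⟩, fun ⟨hd, hu⟩ =>
    ⟨hd, hu, fun _ ha _ _ hab => hab.eq_of_empty ▸ ha, fun _ ha _ _ hab => hab.eq_of_empty ▸ ha⟩⟩

lemma indepOn_empty (V : Team A N) (f : (Fin N → A) → A) : IndepOn ∅ V f :=
  fun _ _ _ _ hab => congrArg f hab.eq_of_empty

def IsFlat (P : Team A N → Prop) : Prop :=
  ∀ W, P W ↔ ∀ a ∈ W, P {a}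

lemma IsFlat.of_iff_forall {P : Team A N → Prop} (R : (Fin N → A) → Prop)
    (h : ∀ W, P W ↔ ∀ a ∈ W, R a) : IsFlat P := by
  intro W
  simp only [h, Set.mem_singleton_iff, forall_eq]

lemma IsFlat.and {P Q : Team A N → Prop} (hP : IsFlat P) (hQ : IsFlat Q) :
    IsFlat fun W => P W ∧ Q W :=
  .of_iff_forall (fun a => P {a} ∧ Q {a}) fun W => by
    rw [hP, hQ, ← forall₂_and]

lemma IsFlat.exists_disjoint_union_iff {P Q : Team A N → Prop} (hP : IsFlat P)
    (hQ : IsFlat Q) (W : Team A N) :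
    (∃ V₁ V₂, Disjoint V₁ V₂ ∧ V₁ ∪ V₂ = W ∧ P V₁ ∧ Q V₂) ↔ ∀ a ∈ W, P {a} ∨ Q {a} := by
  constructor
  · rintro ⟨V₁, V₂, -, rfl, h₁, h₂⟩ a (ha | ha)
    exacts [.inl ((hP V₁).1 h₁ a ha), .inr ((hQ V₂).1 h₂ a ha)]
  · intro h
    refine ⟨W ∩ {a | P {a}}, W \ {a | P {a}}, disjoint_inf_sdiff, Set.inter_union_sdiff _ _,
      (hP _).2 fun a ha => ha.2, (hQ _).2 fun a ha => (h a ha.1).resolve_left ha.2⟩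

lemma IsFlat.exists_disjoint_union {P Q : Team A N → Prop} (hP : IsFlat P) (hQ : IsFlat Q) :
    IsFlat fun W => ∃ V₁ V₂, Disjoint V₁ V₂ ∧ V₁ ∪ V₂ = W ∧ P V₁ ∧ Q V₂ :=
  .of_iff_forall (fun a => P {a} ∨ Q {a}) (hP.exists_disjoint_union_iff hQ)

lemma IsFlat.comp_varAll {P : Team A N → Prop} (hP : IsFlat P) (n : Fin N) :
    IsFlat fun W => P (varAll W n) :=
  .of_iff_forall (fun a => ∀ b, P {Function.update a n b}) fun W => by
    rw [hP]
    simp only [varAll, Set.mem_ofPred_eq]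
    exact ⟨fun h a ha b => h _ ⟨a, ha, b, rfl⟩, fun h _ ⟨a, ha, b, hc⟩ => hc ▸ h a ha b⟩

lemma IsFlat.exists_varF {P : Team A N → Prop} (hP : IsFlat P) (n : Fin N) :
    IsFlat fun W => ∃ f, P (varF W n f) :=
  .of_iff_forall (fun a => ∃ b, P {Function.update a n b}) fun W => by
    classical
    rw [exists_congr fun f => hP (varF W n f)]
    simp only [varF, Set.forall_mem_image]
    refine ⟨fun ⟨f, hf⟩ a ha => ⟨f a, hf ha⟩, fun h => ?_⟩
    choose g hg using h
    exact ⟨fun a => if ha : a ∈ W then g a ha else a n, fun a ha => by simpa [ha] using hg a ha⟩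

end

theorem IFG.Perfect.isFlat_sat {L : Language} {N : ℕ} (A : Type*) [L.Structure A]
    {φ : IFG L N} (hφ : φ.Perfect) (s : Bool) : IsFlat (Sat A φ s) := by
  induction φ generalizing s with
  | equal t₁ t₂ => cases s <;> exact .of_iff_forall _ fun _ => .rfl
  | rel R ts => cases s <;> exact .of_iff_forall _ fun _ => .rfl
  | not φ ih => exact ih hφ !s
  | or J φ₁ φ₂ ih₁ ih₂ =>
    obtain ⟨rfl, hφ₁, hφ₂⟩ := hφ
    cases s
    · exact (ih₁ hφ₁ false).and (ih₂ hφ₂ false)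
    · simpa only [Sat, covJ_empty_iff, and_assoc] using
        (ih₁ hφ₁ true).exists_disjoint_union (ih₂ hφ₂ true)
  | ex n J φ ih =>
    obtain ⟨rfl, hφ⟩ := hφ
    cases s
    · exact (ih hφ false).comp_varAll n
    · simpa only [Sat, indepOn_empty, true_and] using (ih hφ true).exists_varF n

/-- For perfect IFG-formulas: `𝔄 ⊨⁻ φ[W]` iff `𝔄 ⊨⁻ φ[{b}]` for all `b ∈ W`. -/
theorem perfect_flat_neg {L : Language} {N : ℕ} (A : Type*) [L.Structure A]
    (φ : IFG L N) (hφ : φ.Perfect) (W : Team A N) :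
    Sat A φ false W ↔ ∀ b ∈ W, Sat A φ false {b} :=
  hφ.isFlat_sat A false W
end
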